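/- For an integrable random variable X on an atomless probability space, the function f₂ : [0,1] → ℝ defined by f₂(α) = α·ES⁻_α(X) is convex, and for every t ∈ ℝ its Fenchel–Legendre transform satisfies f₂*(t) = max over α ∈ [0,1] of { α·t − f₂(α) } = E[(t − X)_+], with the set of maximizers equal to [ℙ(X < t), ℙ(X ≤ t)]. -/

import Mathlib

open MeasureTheory Set

/-- An atomless measure: every set of nonzero measure can be split nontrivially. -/
def Atomless {Ω : Type*} [MeasurableSpace Ω] (μ : Measure Ω) : Prop :=
  ∀ A : Set Ω, MeasurableSet A → μ A ≠ 0 →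
    ∃ B ⊆ A, MeasurableSet B ∧ μ B ≠ 0 ∧ μ B ≠ μ A

/-- Left quantile (lower Value-at-Risk) of `X` at level `β`. -/
noncomputable def VaR {Ω : Type*} [MeasurableSpace Ω] (μ : Measure Ω) (X : Ω → ℝ) (β : ℝ) : ℝ :=
  sInf {t : ℝ | ENNReal.ofReal β ≤ μ {ω | X ω ≤ t}}

/-- Left Expected Shortfall of `X` at level `α ∈ (0,1]`; the value at `α = 0` is junk, but it
is only ever used multiplied by `α = 0`, implementing the convention `0 · x = 0`. -/
noncomputable def ESminus {Ω : Type*} [MeasurableSpace Ω] (μ : Measure Ω) (X : Ω → ℝ)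
    (α : ℝ) : ℝ :=
  α⁻¹ * ∫ β in Set.Ioo 0 α, VaR μ X β

set_option linter.unusedSectionVars false

section
variable {Ω : Type*} [MeasurableSpace Ω] {μ : Measure Ω} [IsProbabilityMeasure μ]
  {X : Ω → ℝ} (hX : Measurable X)

lemma Sne {β : ℝ} (hβ : β < 1) :
    ∃ s : ℝ, ENNReal.ofReal β ≤ μ {ω | X ω ≤ s} := by
  by_contra h
  push_neg at h
  have hmono : Monotone (fun n : ℕ => {ω | X ω ≤ (n:ℝ)}) := fun m n hmn ω hω =>
    show X ω ≤ (n:ℝ) from le_trans hω (Nat.cast_le.mpr hmn)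
  have hU : ⋃ n : ℕ, {ω | X ω ≤ (n:ℝ)} = univ := by
    ext ω; simp only [mem_iUnion, mem_univ, iff_true, mem_setOf_eq]
    exact exists_nat_ge (X ω)
  have hsup := Directed.measure_iUnion (μ := μ) hmono.directed_le
  rw [hU, measure_univ] at hsup
  have h1 : (1 : ENNReal) ≤ ENNReal.ofReal β := by
    rw [hsup]; exact iSup_le fun n => (h n).le
  exact absurd (lt_of_le_of_lt h1 (ENNReal.ofReal_lt_one.mpr hβ)) (lt_irrefl _)

include hX in
lemma Sbdd {β : ℝ} (hβ : 0 < β) :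
    BddBelow {t : ℝ | ENNReal.ofReal β ≤ μ {ω | X ω ≤ t}} := by
  have hanti : Antitone (fun n : ℕ => {ω | X ω ≤ -(n:ℝ)}) := fun m n hmn ω hω =>
    show X ω ≤ -(m:ℝ) from le_trans hω (neg_le_neg (Nat.cast_le.mpr hmn))
  have hI : ⋂ n : ℕ, {ω | X ω ≤ -(n:ℝ)} = ∅ := by
    ext ω
    simp only [mem_iInter, mem_setOf_eq, mem_empty_iff_false, iff_false, not_forall, not_le]
    obtain ⟨n, hn⟩ := exists_nat_gt (-X ω)
    exact ⟨n, by linarith⟩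
  have hinf := Directed.measure_iInter (μ := μ)
    (s := fun n : ℕ => {ω | X ω ≤ -(n:ℝ)})
    (fun n : ℕ => (hX measurableSet_Iic).nullMeasurableSet)
    hanti.directed_ge ⟨0, measure_ne_top μ _⟩
  rw [hI, measure_empty] at hinf
  have h0 : (0 : ENNReal) < ENNReal.ofReal β := ENNReal.ofReal_pos.mpr hβ
  rw [eq_comm] at hinf
  obtain ⟨n, hn⟩ := (iInf_lt_iff).mp (hinf ▸ h0 : ⨅ n : ℕ, μ {ω | X ω ≤ -(n:ℝ)} < ENNReal.ofReal β)
  refine ⟨-(n:ℝ), fun s hs => ?_⟩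
  by_contra hlt
  push_neg at hlt
  exact absurd (le_trans hs (measure_mono fun ω hω => le_trans hω hlt.le)) (not_le.mpr hn)

include hX in
lemma VaR_le_iff {β : ℝ} (hβ : β ∈ Ioo (0:ℝ) 1) (t : ℝ) :
    VaR μ X β ≤ t ↔ ENNReal.ofReal β ≤ μ {ω | X ω ≤ t} := by
  set S := {s : ℝ | ENNReal.ofReal β ≤ μ {ω | X ω ≤ s}} with hS
  have hne : S.Nonempty := Sne hβ.2
  have hbdd : BddBelow S := Sbdd hX hβ.1
  constructor
  · intro hle
    -- sInf S ∈ S, then monotone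
    have hmem : sInf S ∈ S := by
      have key : ∀ n : ℕ, ENNReal.ofReal β ≤ μ {ω | X ω ≤ sInf S + 1/(n+1)} := by
        intro n
        obtain ⟨s, hsS, hslt⟩ := (Real.lt_sInf_add_pos hne (by positivity : (0:ℝ) < 1/(n+1)))
        exact le_trans hsS (measure_mono fun ω hω => le_trans hω hslt.le)
      have hIeq : {ω | X ω ≤ sInf S} = ⋂ n : ℕ, {ω | X ω ≤ sInf S + 1/(n+1)} := by
        ext ω
        simp only [mem_setOf_eq, mem_iInter]
        constructor
        · intro h n; linarith [(by positivity : (0:ℝ) < 1/((n:ℝ)+1))]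
        · intro h
          by_contra hc
          push_neg at hc
          obtain ⟨n, hn⟩ := exists_nat_one_div_lt (by linarith : (0:ℝ) < X ω - sInf S)
          exact absurd (h n) (by push_neg; linarith)
      have hanti : Antitone (fun n : ℕ => {ω | X ω ≤ sInf S + 1/((n:ℝ)+1)}) := by
        intro m n hmn ω hω
        have : (1:ℝ)/((n:ℝ)+1) ≤ 1/((m:ℝ)+1) := by
          apply one_div_le_one_div_of_le (by positivity)
          exact add_le_add_left (Nat.cast_le.mpr hmn) 1
        exact show X ω ≤ _ from le_trans (show X ω ≤ _ from hω) (by linarith)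
      have hinf := Directed.measure_iInter (μ := μ)
        (s := fun n : ℕ => {ω | X ω ≤ sInf S + 1/((n:ℝ)+1)})
        (fun n : ℕ => (hX measurableSet_Iic).nullMeasurableSet)
        hanti.directed_ge ⟨0, measure_ne_top μ _⟩
      show ENNReal.ofReal β ≤ μ {ω | X ω ≤ sInf S}
      rw [hIeq, hinf]
      exact le_iInf key
    exact le_trans hmem (measure_mono fun ω hω => le_trans hω hle)
  · intro h
    exact csInf_le hbdd h

end

section more
variable {Ω : Type*} [MeasurableSpace Ω] {μ : Measure Ω} [IsProbabilityMeasure μ]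
  {X : Ω → ℝ} (hX : Measurable X)

include hX in
lemma VaR_lt_of {β t : ℝ} (hβ : β ∈ Ioo (0:ℝ) 1) (h : ENNReal.ofReal β < μ {ω | X ω < t}) :
    VaR μ X β < t := by
  have hmono : Monotone (fun n : ℕ => {ω | X ω ≤ t - 1/((n:ℝ)+1)}) := by
    intro m n hmn ω hω
    have : (1:ℝ)/((n:ℝ)+1) ≤ 1/((m:ℝ)+1) :=
      one_div_le_one_div_of_le (by positivity) (add_le_add_left (Nat.cast_le.mpr hmn) 1)
    exact show X ω ≤ _ from le_trans (show X ω ≤ _ from hω) (by linarith)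
  have hU : {ω | X ω < t} = ⋃ n : ℕ, {ω | X ω ≤ t - 1/((n:ℝ)+1)} := by
    ext ω
    simp only [mem_setOf_eq, mem_iUnion]
    constructor
    · intro h
      obtain ⟨n, hn⟩ := exists_nat_one_div_lt (by linarith : (0:ℝ) < t - X ω)
      exact ⟨n, by linarith⟩
    · rintro ⟨n, hn⟩
      have : (0:ℝ) < 1/((n:ℝ)+1) := by positivity
      linarith
  have hsup := Directed.measure_iUnion (μ := μ) hmono.directed_le
  rw [← hU] at hsup
  rw [hsup] at h
  obtain ⟨n, hn⟩ := lt_iSup_iff.mp h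
  calc VaR μ X β ≤ t - 1/((n:ℝ)+1) := csInf_le (Sbdd hX hβ.1) hn.le
    _ < t := by
      have : (0:ℝ) < 1/((n:ℝ)+1) := by positivity
      linarith

include hX in
lemma le_of_VaR_lt {β t : ℝ} (hβ : β ∈ Ioo (0:ℝ) 1) (h : VaR μ X β < t) :
    ENNReal.ofReal β ≤ μ {ω | X ω < t} := by
  have h1 : ENNReal.ofReal β ≤ μ {ω | X ω ≤ VaR μ X β} := (VaR_le_iff hX hβ _).mp le_rfl
  exact le_trans h1 (measure_mono fun ω hω => lt_of_le_of_lt hω h)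

include hX in
lemma VaR_mono {β₁ β₂ : ℝ} (h1 : β₁ ∈ Ioo (0:ℝ) 1) (h2 : β₂ ∈ Ioo (0:ℝ) 1) (h : β₁ ≤ β₂) :
    VaR μ X β₁ ≤ VaR μ X β₂ := by
  rw [VaR_le_iff hX h1]
  exact le_trans (ENNReal.ofReal_le_ofReal h) ((VaR_le_iff hX h2 _).mp le_rfl)

end more

noncomputable def Qf {Ω : Type*} [MeasurableSpace Ω] (μ : Measure Ω) (X : Ω → ℝ) : ℝ → ℝ :=
  (Ioo (0:ℝ) 1).indicator (VaR μ X)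

section Qsec
variable {Ω : Type*} [MeasurableSpace Ω] {μ : Measure Ω} [IsProbabilityMeasure μ]
  {X : Ω → ℝ} (hX : Measurable X)

lemma ofReal_le_meas {β : ℝ} {s : Set Ω} :
    ENNReal.ofReal β ≤ μ s ↔ β ≤ (μ s).toReal := by
  constructor
  · intro h
    rcases le_or_gt β 0 with hβ | hβ
    · exact hβ.trans ENNReal.toReal_nonneg
    · have h2 := ENNReal.toReal_mono (measure_ne_top μ s) h
      rwa [ENNReal.toReal_ofReal hβ.le] at h2
  · intro h
    exact le_of_le_of_eq (ENNReal.ofReal_le_ofReal h)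
      (ENNReal.ofReal_toReal (measure_ne_top μ s))

include hX in
lemma Qf_preimage (c : ℝ) :
    Qf μ X ⁻¹' Iic c = (Ioo (0:ℝ) 1 ∩ Iic ((μ {ω | X ω ≤ c}).toReal)) ∪
      ((Ioo (0:ℝ) 1)ᶜ ∩ (if (0:ℝ) ≤ c then univ else ∅)) := by
  ext β
  by_cases hβ : β ∈ Ioo (0:ℝ) 1
  · simp only [mem_preimage, mem_Iic, Qf, indicator_of_mem hβ, mem_union, mem_inter_iff, hβ,
      true_and, mem_compl_iff, not_true_eq_false, false_and, or_false]
    rw [VaR_le_iff hX hβ, ofReal_le_meas]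
  · simp only [mem_preimage, mem_Iic, Qf, indicator_of_notMem hβ, mem_union, mem_inter_iff, hβ,
      false_and, false_or, mem_compl_iff, not_false_eq_true, true_and]
    by_cases hc : (0:ℝ) ≤ c <;> simp [hc]

include hX in
lemma Qf_meas : Measurable (Qf μ X) := by
  apply measurable_of_Iic
  intro c
  rw [Qf_preimage hX c]
  by_cases hc : (0:ℝ) ≤ c <;>
    simp [hc, (measurableSet_Ioo.inter measurableSet_Iic).union
      (measurableSet_Ioo.compl.inter MeasurableSet.univ), measurableSet_Ioo]

lemma toReal_meas_le_one {s : Set Ω} : (μ s).toReal ≤ 1 := by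
  have h := ENNReal.toReal_mono (by norm_num) (prob_le_one (μ := μ) (s := s))
  simpa using h

include hX in
lemma map_Qf : Measure.map (Qf μ X) (volume.restrict (Ioo (0:ℝ) 1)) = Measure.map X μ := by
  have hprob : IsProbabilityMeasure (volume.restrict (Ioo (0:ℝ) 1)) :=
    ⟨by simp [Real.volume_Ioo]⟩
  have : IsProbabilityMeasure (Measure.map (Qf μ X) (volume.restrict (Ioo (0:ℝ) 1))) :=
    Measure.isProbabilityMeasure_map (Qf_meas hX).aemeasurable
  have : IsProbabilityMeasure (Measure.map X μ) := Measure.isProbabilityMeasure_map hX.aemeasurable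
  refine Measure.ext_of_Iic _ _ (fun c => ?_)
  rw [Measure.map_apply (Qf_meas hX) measurableSet_Iic,
    Measure.map_apply hX measurableSet_Iic,
    Measure.restrict_apply (Qf_meas hX measurableSet_Iic)]
  have hXc : X ⁻¹' Iic c = {ω | X ω ≤ c} := rfl
  rw [hXc]
  set F : ℝ := (μ {ω | X ω ≤ c}).toReal with hF
  have hF0 : 0 ≤ F := ENNReal.toReal_nonneg
  have hF1 : F ≤ 1 := toReal_meas_le_one
  have hset : Qf μ X ⁻¹' Iic c ∩ Ioo 0 1 = Iic F ∩ Ioo 0 1 := by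
    rw [Qf_preimage hX c]
    ext β
    by_cases hc : (0:ℝ) ≤ c <;>
      simp only [hc, if_true, if_false, mem_inter_iff, mem_union, mem_compl_iff, inter_univ,
        inter_empty, mem_empty_iff_false, mem_Iic, mem_Ioo] <;> tauto
  rw [hset]
  have hsub1 : Ioo (0:ℝ) F ⊆ Iic F ∩ Ioo 0 1 := fun β hβ =>
    ⟨hβ.2.le, hβ.1, lt_of_lt_of_le hβ.2 hF1⟩
  have hsub2 : Iic F ∩ Ioo (0:ℝ) 1 ⊆ Ioc 0 F := fun β hβ => ⟨hβ.2.1, hβ.1⟩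
  have h1 : volume (Ioo (0:ℝ) F) ≤ volume (Iic F ∩ Ioo 0 1) := measure_mono hsub1
  have h2 : volume (Iic F ∩ Ioo (0:ℝ) 1) ≤ volume (Ioc 0 F) := measure_mono hsub2
  rw [Real.volume_Ioo] at h1
  rw [Real.volume_Ioc] at h2
  have : volume (Iic F ∩ Ioo (0:ℝ) 1) = ENNReal.ofReal F := le_antisymm (by simpa using h2)
    (by simpa using h1)
  rw [this, hF, ENNReal.ofReal_toReal (measure_ne_top μ _)]

include hX in
lemma Qf_integrable (hXint : Integrable X μ) : Integrable (Qf μ X) volume := by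
  have h0 : Qf μ X = (Ioo (0:ℝ) 1).indicator (Qf μ X) := by
    rw [Qf, Set.indicator_indicator, inter_self]
  rw [h0, integrable_indicator_iff measurableSet_Ioo]
  have h1 : Integrable (fun x : ℝ => x) (Measure.map X μ) :=
    (integrable_map_measure aestronglyMeasurable_id hX.aemeasurable).mpr hXint
  rw [← map_Qf hX] at h1
  exact (integrable_map_measure aestronglyMeasurable_id (Qf_meas hX).aemeasurable).mp h1

include hX in
lemma Qf_plus_integral (t : ℝ) :
    ∫ β in Ioo (0:ℝ) 1, max (t - Qf μ X β) 0 = ∫ ω, max (t - X ω) 0 ∂μ := by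
  have hcont : Continuous (fun x : ℝ => max (t - x) 0) := by continuity
  have h1 := integral_map (φ := Qf μ X) (μ := volume.restrict (Ioo (0:ℝ) 1))
    (Qf_meas hX).aemeasurable (f := fun x : ℝ => max (t - x) 0)
    (hcont.aestronglyMeasurable)
  have h2 := integral_map (φ := X) (μ := μ) hX.aemeasurable (f := fun x : ℝ => max (t - x) 0)
    (hcont.aestronglyMeasurable)
  rw [← h1, map_Qf hX, h2]

end Qsec

lemma ii_Ioo {f : ℝ → ℝ} {a b : ℝ} (hab : a ≤ b) :
    ∫ x in a..b, f x = ∫ x in Ioo a b, f x := by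
  rw [intervalIntegral.integral_of_le hab, MeasureTheory.integral_Ioc_eq_integral_Ioo]

section main
variable {Ω : Type*} [MeasurableSpace Ω] {μ : Measure Ω} [IsProbabilityMeasure μ]
  {X : Ω → ℝ} (hX : Measurable X)

include hX in
lemma f2_eq {α : ℝ} (hα : α ∈ Icc (0:ℝ) 1) :
    α * ESminus μ X α = ∫ β in (0:ℝ)..α, Qf μ X β := by
  rw [ii_Ioo hα.1]
  rcases eq_or_ne α 0 with rfl | hα0
  · rw [zero_mul, Ioo_self]
    simp
  · rw [ESminus, ← mul_assoc, mul_inv_cancel₀ hα0, one_mul]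
    refine setIntegral_congr_fun measurableSet_Ioo (fun β hβ => ?_)
    show VaR μ X β = Qf μ X β
    have hβ01 : β ∈ Ioo (0:ℝ) 1 := ⟨hβ.1, lt_of_lt_of_le hβ.2 hα.2⟩
    rw [Qf, indicator_of_mem hβ01]

end main

theorem conjugate_f2' {Ω : Type*} [MeasurableSpace Ω] (μ : Measure Ω)
    [IsProbabilityMeasure μ] (X : Ω → ℝ)
    (hXmeas : Measurable X) (hXint : Integrable X μ) :
    ConvexOn ℝ (Set.Icc (0 : ℝ) 1) (fun α => α * ESminus μ X α) ∧
    ∀ t : ℝ,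
      IsGreatest {y : ℝ | ∃ α ∈ Set.Icc (0 : ℝ) 1, y = α * t - α * ESminus μ X α}
        (∫ ω, max (t - X ω) 0 ∂μ) ∧
      {α ∈ Set.Icc (0 : ℝ) 1 | α * t - α * ESminus μ X α = ∫ ω, max (t - X ω) 0 ∂μ}
        = Set.Icc (μ {ω | X ω < t}).toReal (μ {ω | X ω ≤ t}).toReal := by
  have hQi : Integrable (Qf μ X) volume := Qf_integrable hXmeas hXint
  have hIiQ : ∀ a b : ℝ, IntervalIntegrable (Qf μ X) volume a b :=
    fun a b => hQi.intervalIntegrable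
  constructor
  · -- Convexity
    refine convexOn_of_slope_mono_adjacent (convex_Icc 0 1) (fun {x y z} hx hz hxy hyz => ?_)
    have hy : y ∈ Icc (0:ℝ) 1 := ⟨hx.1.trans hxy.le, hyz.le.trans hz.2⟩
    have hy01 : y ∈ Ioo (0:ℝ) 1 := ⟨lt_of_le_of_lt hx.1 hxy, lt_of_lt_of_le hyz hz.2⟩
    show (y * ESminus μ X y - x * ESminus μ X x) / (y - x)
      ≤ (z * ESminus μ X z - y * ESminus μ X y) / (z - y)
    rw [f2_eq hXmeas hx, f2_eq hXmeas hy, f2_eq hXmeas hz]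
    have e1 : (∫ β in (0:ℝ)..y, Qf μ X β) - ∫ β in (0:ℝ)..x, Qf μ X β
        = ∫ β in x..y, Qf μ X β := by
      rw [← intervalIntegral.integral_add_adjacent_intervals (hIiQ 0 x) (hIiQ x y)]; ring
    have e2 : (∫ β in (0:ℝ)..z, Qf μ X β) - ∫ β in (0:ℝ)..y, Qf μ X β
        = ∫ β in y..z, Qf μ X β := by
      rw [← intervalIntegral.integral_add_adjacent_intervals (hIiQ 0 y) (hIiQ y z)]; ring
    rw [e1, e2]
    have d1 : (0:ℝ) < y - x := by linarith
    have d2 : (0:ℝ) < z - y := by linarith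
    have hub : ∫ β in x..y, Qf μ X β ≤ (y - x) * Qf μ X y := by
      rw [ii_Ioo hxy.le]
      calc ∫ β in Ioo x y, Qf μ X β ≤ ∫ _β in Ioo x y, Qf μ X y := by
            refine setIntegral_mono_on hQi.integrableOn
              (integrableOn_const (C := Qf μ X y) (by simp [Real.volume_Ioo]) (by simp))
              measurableSet_Ioo (fun β hβ => ?_)
            have hβ01 : β ∈ Ioo (0:ℝ) 1 := ⟨lt_of_le_of_lt hx.1 hβ.1, hβ.2.trans_le hy.2⟩
            show Qf μ X β ≤ Qf μ X y
            rw [Qf, indicator_of_mem hβ01, indicator_of_mem hy01]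
            exact VaR_mono hXmeas hβ01 hy01 hβ.2.le
        _ = (y - x) * Qf μ X y := by
            simp [setIntegral_const, Real.volume_Ioo,
              ENNReal.toReal_ofReal (sub_nonneg.mpr hxy.le), hxy.le]
    have hlb : (z - y) * Qf μ X y ≤ ∫ β in y..z, Qf μ X β := by
      rw [ii_Ioo hyz.le]
      calc (z - y) * Qf μ X y = ∫ _β in Ioo y z, Qf μ X y := by
            simp [setIntegral_const, Real.volume_Ioo,
              ENNReal.toReal_ofReal (sub_nonneg.mpr hyz.le), hyz.le]
        _ ≤ ∫ β in Ioo y z, Qf μ X β := by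
            refine setIntegral_mono_on
              (integrableOn_const (C := Qf μ X y) (by simp [Real.volume_Ioo]) (by simp))
              hQi.integrableOn measurableSet_Ioo (fun β hβ => ?_)
            have hβ01 : β ∈ Ioo (0:ℝ) 1 := ⟨hy01.1.trans hβ.1, hβ.2.trans_le hz.2⟩
            show Qf μ X y ≤ Qf μ X β
            rw [Qf, indicator_of_mem hβ01, indicator_of_mem hy01]
            exact VaR_mono hXmeas hy01 hβ01 hβ.1.le
    have s1 : ((∫ β in x..y, Qf μ X β)) / (y - x) ≤ Qf μ X y :=
      (div_le_iff₀ d1).mpr (by linarith)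
    have s2 : Qf μ X y ≤ ((∫ β in y..z, Qf μ X β)) / (z - y) :=
      (le_div_iff₀ d2).mpr (by linarith)
    exact s1.trans s2
  · intro t
    set m : ℝ := (μ {ω | X ω < t}).toReal with hm
    set F : ℝ := (μ {ω | X ω ≤ t}).toReal with hF
    have hm0 : 0 ≤ m := ENNReal.toReal_nonneg
    have hmF : m ≤ F := ENNReal.toReal_mono (measure_ne_top μ _)
      (measure_mono (fun ω hω => show X ω ≤ t from le_of_lt hω))
    have hF0 : 0 ≤ F := hm0.trans hmF
    have hF1 : F ≤ 1 := toReal_meas_le_one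
    have hIih : ∀ a b : ℝ, IntervalIntegrable (fun β => t - Qf μ X β) volume a b :=
      fun a b => (intervalIntegrable_const).sub (hIiQ a b)
    have hpp : ∀ a b : ℝ, a ≤ b →
        IntervalIntegrable (fun β => max (t - Qf μ X β) 0) volume a b := by
      intro a b hab
      rw [intervalIntegrable_iff_integrableOn_Ioc_of_le hab]
      exact ((intervalIntegrable_iff_integrableOn_Ioc_of_le hab).mp (hIih a b)).pos_part
    -- sign facts
    have sgn1 : ∀ β ∈ Ioo (0:ℝ) 1, β ≤ F → Qf μ X β ≤ t := by
      intro β hβ hle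
      rw [Qf, indicator_of_mem hβ]
      exact (VaR_le_iff hXmeas hβ t).mpr (ofReal_le_meas.mpr hle)
    have sgn2 : ∀ β ∈ Ioo (0:ℝ) 1, F < β → t < Qf μ X β := by
      intro β hβ hlt
      by_contra hc
      push_neg at hc
      rw [Qf, indicator_of_mem hβ] at hc
      exact absurd (ofReal_le_meas.mp ((VaR_le_iff hXmeas hβ t).mp hc)) (not_le.mpr hlt)
    have sgn3 : ∀ β ∈ Ioo (0:ℝ) 1, β < m → Qf μ X β < t := by
      intro β hβ hlt
      rw [Qf, indicator_of_mem hβ]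
      refine VaR_lt_of hXmeas hβ ?_
      rw [← ENNReal.ofReal_toReal (measure_ne_top μ {ω | X ω < t})]
      exact (ENNReal.ofReal_lt_ofReal_iff_of_nonneg hβ.1.le).mpr hlt
    have sgn4 : ∀ β ∈ Ioo (0:ℝ) 1, m < β → t ≤ Qf μ X β := by
      intro β hβ hlt
      by_contra hc
      push_neg at hc
      rw [Qf, indicator_of_mem hβ] at hc
      exact absurd (ofReal_le_meas.mp (le_of_VaR_lt hXmeas hβ hc)) (not_le.mpr hlt)
    -- G equals objective
    have hG_eq : ∀ α ∈ Icc (0:ℝ) 1,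
        α * t - α * ESminus μ X α = ∫ β in (0:ℝ)..α, (t - Qf μ X β) := by
      intro α hα
      rw [f2_eq hXmeas hα,
        intervalIntegral.integral_sub (intervalIntegrable_const) (hIiQ 0 α),
        intervalIntegral.integral_const]
      simp [mul_comm]
    -- G F = M
    have hGF : (∫ β in (0:ℝ)..F, (t - Qf μ X β)) = ∫ ω, max (t - X ω) 0 ∂μ := by
      have hsplit : (∫ β in (0:ℝ)..F, max (t - Qf μ X β) 0)
          + ∫ β in F..(1:ℝ), max (t - Qf μ X β) 0
          = ∫ β in (0:ℝ)..(1:ℝ), max (t - Qf μ X β) 0 :=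
        intervalIntegral.integral_add_adjacent_intervals (hpp 0 F hF0) (hpp F 1 hF1)
      have h1 : (∫ β in (0:ℝ)..F, max (t - Qf μ X β) 0)
          = ∫ β in (0:ℝ)..F, (t - Qf μ X β) := by
        rw [ii_Ioo hF0, ii_Ioo hF0]
        refine setIntegral_congr_fun measurableSet_Ioo (fun β hβ => ?_)
        have hβ01 : β ∈ Ioo (0:ℝ) 1 := ⟨hβ.1, hβ.2.trans_le hF1⟩
        exact max_eq_left (by linarith [sgn1 β hβ01 hβ.2.le])
      have h2 : (∫ β in F..(1:ℝ), max (t - Qf μ X β) 0) = 0 := by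
        rw [ii_Ioo hF1]
        have hzero : EqOn (fun β => max (t - Qf μ X β) 0) (fun _ => (0:ℝ)) (Ioo F (1:ℝ)) := by
          intro β hβ
          have hβ01 : β ∈ Ioo (0:ℝ) 1 := ⟨lt_of_le_of_lt hF0 hβ.1, hβ.2⟩
          exact max_eq_right (by linarith [sgn2 β hβ01 hβ.1])
        rw [setIntegral_congr_fun measurableSet_Ioo hzero]
        simp
      have h3 : (∫ β in (0:ℝ)..(1:ℝ), max (t - Qf μ X β) 0) = ∫ ω, max (t - X ω) 0 ∂μ := by
        rw [ii_Ioo zero_le_one, ← Qf_plus_integral hXmeas t]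
      rw [← h3, ← hsplit, h1, h2, add_zero]
    have hGdiff : ∀ a b : ℝ, (∫ β in (0:ℝ)..b, (t - Qf μ X β))
        - (∫ β in (0:ℝ)..a, (t - Qf μ X β)) = ∫ β in a..b, (t - Qf μ X β) := by
      intro a b
      rw [← intervalIntegral.integral_add_adjacent_intervals (hIih 0 a) (hIih a b)]
      ring
    -- upper bound
    have key2 : ∀ α ∈ Icc (0:ℝ) 1,
        (∫ β in (0:ℝ)..α, (t - Qf μ X β)) ≤ ∫ β in (0:ℝ)..F, (t - Qf μ X β) := by
      intro α hα
      rcases le_or_gt α F with hle | hlt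
      · have h0 : 0 ≤ (∫ β in (0:ℝ)..F, (t - Qf μ X β))
            - ∫ β in (0:ℝ)..α, (t - Qf μ X β) := by
          rw [hGdiff, ii_Ioo hle]
          refine setIntegral_nonneg measurableSet_Ioo (fun β hβ => ?_)
          have hβ01 : β ∈ Ioo (0:ℝ) 1 := ⟨lt_of_le_of_lt hα.1 hβ.1, hβ.2.trans_le hF1⟩
          linarith [sgn1 β hβ01 hβ.2.le]
        linarith
      · have h0 : (∫ β in (0:ℝ)..α, (t - Qf μ X β))
            - (∫ β in (0:ℝ)..F, (t - Qf μ X β)) ≤ 0 := by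
          rw [hGdiff, ii_Ioo hlt.le]
          refine setIntegral_nonpos measurableSet_Ioo (fun β hβ => ?_)
          have hβ01 : β ∈ Ioo (0:ℝ) 1 := ⟨lt_of_le_of_lt hF0 hβ.1, hβ.2.trans_le hα.2⟩
          linarith [sgn2 β hβ01 hβ.1]
        linarith
    -- equality on [m, F]
    have key3 : ∀ α ∈ Icc m F,
        (∫ β in (0:ℝ)..α, (t - Qf μ X β)) = ∫ β in (0:ℝ)..F, (t - Qf μ X β) := by
      intro α hα
      have h0 : (∫ β in (0:ℝ)..F, (t - Qf μ X β))
          - (∫ β in (0:ℝ)..α, (t - Qf μ X β)) = 0 := by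
        rw [hGdiff, ii_Ioo hα.2]
        have hzero : EqOn (fun β => t - Qf μ X β) (fun _ => (0:ℝ)) (Ioo α F) := by
          intro β hβ
          have hβ01 : β ∈ Ioo (0:ℝ) 1 := ⟨lt_of_le_of_lt (hm0.trans hα.1) hβ.1, hβ.2.trans_le hF1⟩
          have e1 := sgn1 β hβ01 hβ.2.le
          have e2 := sgn4 β hβ01 (lt_of_le_of_lt hα.1 hβ.1)
          show t - Qf μ X β = 0
          linarith
        rw [setIntegral_congr_fun measurableSet_Ioo hzero]
        simp
      linarith
    -- strict below m
    have key4 : ∀ α ∈ Icc (0:ℝ) 1, α < m →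
        (∫ β in (0:ℝ)..α, (t - Qf μ X β)) < ∫ β in (0:ℝ)..F, (t - Qf μ X β) := by
      intro α hα hlt
      have hpos : 0 < ∫ β in α..m, (t - Qf μ X β) := by
        refine intervalIntegral.intervalIntegral_pos_of_pos_on (hIih α m) (fun β hβ => ?_) hlt
        have hβ01 : β ∈ Ioo (0:ℝ) 1 :=
          ⟨lt_of_le_of_lt hα.1 hβ.1, lt_of_lt_of_le hβ.2 (hmF.trans hF1)⟩
        linarith [sgn3 β hβ01 hβ.2]
      have hGm := key3 m ⟨le_rfl, hmF⟩
      have hd := hGdiff α m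
      linarith
    -- strict above F
    have key5 : ∀ α ∈ Icc (0:ℝ) 1, F < α →
        (∫ β in (0:ℝ)..α, (t - Qf μ X β)) < ∫ β in (0:ℝ)..F, (t - Qf μ X β) := by
      intro α hα hlt
      have hpos : 0 < ∫ β in F..α, -(t - Qf μ X β) := by
        refine intervalIntegral.intervalIntegral_pos_of_pos_on
          ((hIih F α).neg) (fun β hβ => ?_) hlt
        have hβ01 : β ∈ Ioo (0:ℝ) 1 := ⟨lt_of_le_of_lt hF0 hβ.1, hβ.2.trans_le hα.2⟩
        have := sgn2 β hβ01 hβ.1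
        simp only [neg_sub]
        linarith
      rw [intervalIntegral.integral_neg] at hpos
      have hd := hGdiff F α
      linarith
    have hFIcc : F ∈ Icc (0:ℝ) 1 := ⟨hF0, hF1⟩
    constructor
    · constructor
      · exact ⟨F, hFIcc, by rw [hG_eq F hFIcc, hGF]⟩
      · rintro y ⟨α, hα, rfl⟩
        rw [hG_eq α hα, ← hGF]
        exact key2 α hα
    · ext α
      simp only [mem_setOf_eq, mem_Icc]
      constructor
      · rintro ⟨hα, heq⟩
        rw [hG_eq α hα, ← hGF] at heq
        constructor
        · by_contra hc
          push_neg at hc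
          exact absurd heq (ne_of_lt (key4 α hα hc))
        · by_contra hc
          push_neg at hc
          exact absurd heq (ne_of_lt (key5 α hα hc))
      · rintro ⟨h1, h2⟩
        have hα : α ∈ Icc (0:ℝ) 1 := ⟨hm0.trans h1, h2.trans hF1⟩
        exact ⟨hα, by rw [hG_eq α hα, key3 α ⟨h1, h2⟩, hGF]⟩


/-- The function `f₂(α) = α ES⁻_α(X)` on `[0,1]` is convex, its Fenchel–Legendre transform
satisfies `f₂*(t) = max over α ∈ [0,1] of { α t - f₂(α) } = E[(t - X)_+]` (the maximum being
attained), and the set of maximizers is `[ℙ(X < t), ℙ(X ≤ t)]`. -/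
theorem conjugate_f2 {Ω : Type*} [MeasurableSpace Ω] (μ : Measure Ω)
    [IsProbabilityMeasure μ] (hμ : Atomless μ) (X : Ω → ℝ)
    (hXmeas : Measurable X) (hXint : Integrable X μ) :
    ConvexOn ℝ (Set.Icc (0 : ℝ) 1) (fun α => α * ESminus μ X α) ∧
    ∀ t : ℝ,
      IsGreatest {y : ℝ | ∃ α ∈ Set.Icc (0 : ℝ) 1, y = α * t - α * ESminus μ X α}
        (∫ ω, max (t - X ω) 0 ∂μ) ∧
      {α ∈ Set.Icc (0 : ℝ) 1 | α * t - α * ESminus μ X α = ∫ ω, max (t - X ω) 0 ∂μ}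
        = Set.Icc (μ {ω | X ω < t}).toReal (μ {ω | X ω ≤ t}).toReal :=
  conjugate_f2' μ X hXmeas hXint
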